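/- Let E ⊆ ℝⁿ (n ≥ 2) be a bounded convex set with nonempty interior, and let x₀, x₁ ∈ ∂E be points realizing the diameter, i.e. |x₁ − x₀| = diam(E). Then for every t ∈ [0,1], the (n−1)-dimensional slice E_t = {x̃ ∈ ℝ^{n−1} : x_t + (x̃,0) ∈ E} of E by the hyperplane through x_t = t·x₁ + (1−t)·x₀ orthogonal to x₁ − x₀ (in coordinates where x₁ − x₀ points in the n-th coordinate direction) satisfies H^{n−1}(E_t) ≤ n·|E|/diam(E). -/

import Mathlib

open MeasureTheory Metric Bornology
open scoped ENNReal

/-- The embedding `ℝ^{n-1} → ℝⁿ`, `x̃ ↦ (x̃, 0)`, appending `0` as the last coordinate. -/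
noncomputable def padZero (m : ℕ) (x : EuclideanSpace ℝ (Fin m)) :
    EuclideanSpace ℝ (Fin (m + 1)) :=
  (EuclideanSpace.equiv (Fin (m + 1)) ℝ).symm
    (Fin.snoc (EuclideanSpace.equiv (Fin m) ℝ x) 0)

/-- The horizontal `(n-1)`-dimensional slice of `E ⊆ ℝⁿ` through the point `p`:
`{x̃ ∈ ℝ^{n-1} : p + (x̃, 0) ∈ E}`. -/
def hslice (m : ℕ) (E : Set (EuclideanSpace ℝ (Fin (m + 1))))
    (p : EuclideanSpace ℝ (Fin (m + 1))) : Set (EuclideanSpace ℝ (Fin m)) :=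
  {x : EuclideanSpace ℝ (Fin m) | p + padZero m x ∈ E}

/-! Replace `E` by its closure `K`: it is convex, contains `x₀` and `x₁`, and has the same volume,
since the frontier of a convex set is null. Put `d = diam E` and `e = e_n`. By convexity, the
slice of `K` at height `(1 - u) a + u s` contains a translate of `u` times the slice at height
`s` whenever `x₀ + a e ∈ K`, so its measure is at least `uⁿ⁻¹` times as large. Integrating this
bound over the heights (Fubini) for the cones with apex `x₀` (height `0`) and `x₁` (height `d`)
over the slice at height `t d` gives
`|E| ≥ (t d / n + (1 - t) d / n) H^{n-1}(E_t) = d H^{n-1}(E_t) / n`. -/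

open scoped Pointwise Interval

section Slices

variable (m : ℕ) {K : Set (EuclideanSpace ℝ (Fin (m + 1)))}

theorem padZero_smul (u : ℝ) (x : EuclideanSpace ℝ (Fin m)) :
    padZero m (u • x) = u • padZero m x := by
  ext i
  refine Fin.lastCases ?_ (fun j => ?_) i <;> simp [padZero]

theorem measurePreserving_smul_single_add_padZero :
    MeasurePreserving
      (fun q : ℝ × EuclideanSpace ℝ (Fin m) =>
        q.1 • EuclideanSpace.single (Fin.last m) (1 : ℝ) + padZero m q.2) := by
  have h := (EuclideanSpace.volume_preserving_symm_measurableEquiv_toLp (Fin (m + 1))).symm.comp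
    ((volume_preserving_piFinSuccAbove (fun _ : Fin (m + 1) => ℝ) (Fin.last m)).symm.comp
      ((MeasurePreserving.id (volume : Measure ℝ)).prod
        (EuclideanSpace.volume_preserving_symm_measurableEquiv_toLp (Fin m))))
  convert h using 1
  · funext q
    ext i
    refine Fin.lastCases ?_ (fun j => ?_) i
    · simp [padZero]
    · simp [padZero, (Fin.castSucc_lt_last j).ne]
  · exact Measure.volume_eq_prod _ _

theorem volume_eq_lintegral_volume_hslice (hK : MeasurableSet K)
    (p : EuclideanSpace ℝ (Fin (m + 1))) :
    volume K =
      ∫⁻ c : ℝ, volume (hslice m K (p + c • EuclideanSpace.single (Fin.last m) (1 : ℝ))) := by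
  have hΦ := (measurePreserving_add_left volume p).comp
    (measurePreserving_smul_single_add_padZero m)
  rw [← hΦ.measure_preimage hK.nullMeasurableSet, Measure.volume_eq_prod,
    Measure.prod_apply (hΦ.measurable hK)]
  simp only [hslice, add_assoc]
  rfl

theorem volume_hslice_cone (hK : Convex ℝ K) {q : EuclideanSpace ℝ (Fin (m + 1))} (hq : q ∈ K)
    (p : EuclideanSpace ℝ (Fin (m + 1))) {u : ℝ} (hu : u ∈ Set.Icc (0 : ℝ) 1) :
    ENNReal.ofReal (u ^ m) * volume (hslice m K p) ≤
      volume (hslice m K ((1 - u) • q + u • p)) := by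
  have hsub : u • hslice m K p ⊆ hslice m K ((1 - u) • q + u • p) := by
    rintro _ ⟨x, hx, rfl⟩
    have := hK hq hx (sub_nonneg.2 hu.2) hu.1 (sub_add_cancel 1 u)
    simpa only [hslice, Set.mem_ofPred_eq, padZero_smul, smul_add, add_assoc] using this
  calc ENNReal.ofReal (u ^ m) * volume (hslice m K p) = volume (u • hslice m K p) := by
        rw [Measure.addHaar_smul_of_nonneg volume hu.1, finrank_euclideanSpace_fin]
    _ ≤ _ := measure_mono hsub

theorem volume_hslice_cone_along_line (hK : Convex ℝ K) (p v : EuclideanSpace ℝ (Fin (m + 1)))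
    {a : ℝ} (ha : p + a • v ∈ K) (b : ℝ) {u : ℝ} (hu : u ∈ Set.Icc (0 : ℝ) 1) :
    ENNReal.ofReal (u ^ m) * volume (hslice m K (p + b • v)) ≤
      volume (hslice m K (p + ((1 - u) * a + u * b) • v)) := by
  have hpt : p + ((1 - u) * a + u * b) • v = (1 - u) • (p + a • v) + u • (p + b • v) := by
    module
  rw [hpt]
  exact volume_hslice_cone m hK ha _ hu

end Slices

section ConeIntegrals

variable {a b : ℝ} (m : ℕ)

theorem div_sub_mem_Icc_of_mem_uIcc {s : ℝ} (hs : s ∈ Set.uIcc a b) :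
    (s - a) / (b - a) ∈ Set.Icc (0 : ℝ) 1 := by
  rcases Set.mem_uIcc.1 hs with ⟨has, hsb⟩ | ⟨hbs, hsa⟩
  · exact ⟨div_nonneg (by linarith) (by linarith), div_le_one_of_le₀ (by linarith) (by linarith)⟩
  · exact ⟨div_nonneg_of_nonpos (by linarith) (by linarith),
      div_le_one_of_ge (by linarith) (by linarith)⟩

theorem integral_div_sub_pow (hab : a ≠ b) :
    ∫ s in a..b, ((s - a) / (b - a)) ^ m = (b - a) / (m + 1) := by
  have hba : b - a ≠ 0 := sub_ne_zero.2 hab.symm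
  simp only [div_pow]
  rw [intervalIntegral.integral_div, intervalIntegral.integral_comp_sub_right (· ^ m),
    integral_pow, sub_self, zero_pow (Nat.succ_ne_zero m), sub_zero, pow_succ]
  field_simp

theorem lintegral_uIoc_ofReal_div_sub_pow (hab : a ≠ b) :
    ∫⁻ s in Ι a b, ENNReal.ofReal (((s - a) / (b - a)) ^ m) =
      ENNReal.ofReal (|b - a| / (m + 1)) := by
  have hnonneg : ∀ s ∈ Ι a b, 0 ≤ ((s - a) / (b - a)) ^ m := fun s hs =>
    pow_nonneg (div_sub_mem_Icc_of_mem_uIcc (Set.uIoc_subset_uIcc hs)).1 m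
  rw [← ofReal_integral_eq_lintegral_ofReal
    ((by fun_prop : Continuous fun s : ℝ => ((s - a) / (b - a)) ^ m).integrableOn_uIoc)
    ((ae_restrict_iff' measurableSet_uIoc).2 (ae_of_all _ hnonneg))]
  congr 1
  have h := intervalIntegral.norm_integral_eq_norm_integral_uIoc
    (fun s => ((s - a) / (b - a)) ^ m) (a := a) (b := b) (μ := volume)
  rw [integral_div_sub_pow m hab, Real.norm_eq_abs, Real.norm_eq_abs, abs_div,
    abs_of_pos (by positivity : (0 : ℝ) < m + 1),
    abs_of_nonneg (setIntegral_nonneg measurableSet_uIoc hnonneg)] at h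
  exact h.symm

theorem ofReal_mul_le_lintegral_uIoc_of_cone {g : ℝ → ℝ≥0∞}
    (hg : ∀ u ∈ Set.Icc (0 : ℝ) 1, ENNReal.ofReal (u ^ m) * g b ≤ g ((1 - u) * a + u * b)) :
    ENNReal.ofReal (|b - a| / (m + 1)) * g b ≤ ∫⁻ s in Ι a b, g s := by
  rcases eq_or_ne a b with rfl | hab
  · simp
  have hbound : ∀ s ∈ Ι a b, ENNReal.ofReal (((s - a) / (b - a)) ^ m) * g b ≤ g s := by
    intro s hs
    have hs' : (1 - (s - a) / (b - a)) * a + (s - a) / (b - a) * b = s := by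
      field_simp [sub_ne_zero.2 hab.symm]
      ring
    simpa only [hs'] using hg _ (div_sub_mem_Icc_of_mem_uIcc (Set.uIoc_subset_uIcc hs))
  calc ENNReal.ofReal (|b - a| / (m + 1)) * g b
      = ∫⁻ s in Ι a b, ENNReal.ofReal (((s - a) / (b - a)) ^ m) * g b := by
        rw [lintegral_mul_const _ (by fun_prop), lintegral_uIoc_ofReal_div_sub_pow m hab]
    _ ≤ ∫⁻ s in Ι a b, g s := setLIntegral_mono_ae' measurableSet_uIoc (ae_of_all _ hbound)

theorem ofReal_mul_le_lintegral_of_two_cones {g : ℝ → ℝ≥0∞} {c : ℝ} (hab : a ≤ b) (hbc : b ≤ c)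
    (ha : ∀ u ∈ Set.Icc (0 : ℝ) 1, ENNReal.ofReal (u ^ m) * g b ≤ g ((1 - u) * a + u * b))
    (hc : ∀ u ∈ Set.Icc (0 : ℝ) 1, ENNReal.ofReal (u ^ m) * g b ≤ g ((1 - u) * c + u * b)) :
    ENNReal.ofReal ((c - a) / (m + 1)) * g b ≤ ∫⁻ s, g s := by
  have hsplit : ENNReal.ofReal ((c - a) / (m + 1)) =
      ENNReal.ofReal (|b - a| / (m + 1)) + ENNReal.ofReal (|b - c| / (m + 1)) := by
    rw [abs_of_nonneg (sub_nonneg.2 hab), abs_of_nonpos (sub_nonpos.2 hbc),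
      ← ENNReal.ofReal_add (div_nonneg (by linarith) (by positivity))
        (div_nonneg (by linarith) (by positivity))]
    congr 1
    ring
  calc ENNReal.ofReal ((c - a) / (m + 1)) * g b
      ≤ (∫⁻ s in Ι a b, g s) + ∫⁻ s in Ι c b, g s := by
        rw [hsplit, add_mul]
        exact add_le_add (ofReal_mul_le_lintegral_uIoc_of_cone m ha)
          (ofReal_mul_le_lintegral_uIoc_of_cone m hc)
    _ = ∫⁻ s in Ι a b ∪ Ι c b, g s := by
        rw [Set.uIoc_of_le hab, Set.uIoc_of_ge hbc, lintegral_union measurableSet_Ioc]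
        exact Set.Ioc_disjoint_Ioc_of_le le_rfl
    _ ≤ ∫⁻ s, g s := setLIntegral_le_lintegral _ _

end ConeIntegrals

theorem Convex.addHaar_closure {F : Type*} [NormedAddCommGroup F] [NormedSpace ℝ F]
    [MeasurableSpace F] [BorelSpace F] [FiniteDimensional ℝ F] (μ : Measure F)
    [μ.IsAddHaarMeasure] {s : Set F} (hs : Convex ℝ s) : μ (closure s) = μ s := by
  refine le_antisymm ?_ (measure_mono subset_closure)
  calc μ (closure s) ≤ μ s + μ (frontier s) := by
        rw [closure_eq_self_union_frontier]; exact measure_union_le _ _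
    _ = μ s := by rw [hs.addHaar_frontier μ, add_zero]

theorem ENNReal.toReal_le_div_of_ofReal_mul_le {r : ℝ} {a b : ℝ≥0∞} (hr : 0 < r) (hb : b ≠ ⊤)
    (h : ENNReal.ofReal r * a ≤ b) : a.toReal ≤ b.toReal / r := by
  have ha : a ≠ ⊤ := by
    rintro rfl
    exact hb (top_unique ((ENNReal.mul_top (ENNReal.ofReal_pos.2 hr).ne').symm.trans_le h))
  rw [le_div_iff₀ hr, mul_comm, ← ENNReal.toReal_ofReal hr.le, ← ENNReal.toReal_mul]
  exact ENNReal.toReal_mono hb h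

theorem slice_measure_le_general
    (m : ℕ) (E : Set (EuclideanSpace ℝ (Fin (m + 1))))
    (hconv : Convex ℝ E) (hbd : IsBounded E) (hint : (interior E).Nonempty)
    (x₀ x₁ : EuclideanSpace ℝ (Fin (m + 1)))
    (hx₀ : x₀ ∈ frontier E) (hx₁ : x₁ ∈ frontier E)
    (hdiam : x₁ - x₀ = Metric.diam E • EuclideanSpace.single (Fin.last m) (1 : ℝ))
    (t : ℝ) (ht : t ∈ Set.Icc (0 : ℝ) 1) :
    (volume (hslice m E (t • x₁ + (1 - t) • x₀))).toReal
      ≤ (m + 1) * (volume E).toReal / Metric.diam E := by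
  set d := Metric.diam E
  set e := EuclideanSpace.single (Fin.last m) (1 : ℝ)
  set K := closure E
  have hd : 0 < d := diam_pos (Set.not_subsingleton_iff.1 fun h =>
    (volume.measure_pos_of_nonempty_interior hint).ne' (h.measure_zero _)) hbd
  have hx₁_eq : x₁ = x₀ + d • e := sub_eq_iff_eq_add'.1 hdiam
  have hxt : t • x₁ + (1 - t) • x₀ = x₀ + (t * d) • e := by rw [hx₁_eq]; module
  have hx₀K : x₀ + (0 : ℝ) • e ∈ K := by simpa using frontier_subset_closure hx₀
  have hx₁K : x₀ + d • e ∈ K := hx₁_eq ▸ frontier_subset_closure hx₁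
  have hcone := fun a (ha : x₀ + a • e ∈ K) u (hu : u ∈ Set.Icc (0 : ℝ) 1) =>
    volume_hslice_cone_along_line m hconv.closure x₀ e ha (t * d) hu
  have key : ENNReal.ofReal (d / (m + 1)) * volume (hslice m K (x₀ + (t * d) • e))
      ≤ volume E := by
    rw [← hconv.addHaar_closure volume,
      volume_eq_lintegral_volume_hslice m isClosed_closure.measurableSet x₀]
    simpa only [sub_zero] using ofReal_mul_le_lintegral_of_two_cones m (mul_nonneg ht.1 hd.le)
      (mul_le_of_le_one_left hd.le ht.2) (hcone 0 hx₀K) (hcone d hx₁K)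
  have hslice_le : volume (hslice m E (t • x₁ + (1 - t) • x₀)) ≤
      volume (hslice m K (x₀ + (t * d) • e)) := by
    rw [hxt]; exact measure_mono fun x hx => subset_closure hx
  calc (volume (hslice m E (t • x₁ + (1 - t) • x₀))).toReal
      ≤ (volume E).toReal / (d / (m + 1)) :=
        ENNReal.toReal_le_div_of_ofReal_mul_le (by positivity) hbd.measure_lt_top.ne
          ((mul_le_mul_right hslice_le _).trans key)
    _ = (m + 1) * (volume E).toReal / d := by field_simp

/-- If `E ⊆ ℝⁿ` (`n = m + 1 ≥ 2`) is a bounded convex set with nonempty interior whose diameter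
is realized by boundary points `x₀, x₁` with `x₁ - x₀ = diam(E) · e_n`, then for every
`t ∈ [0,1]` the horizontal slice `E_t` of `E` through `x_t = t x₁ + (1-t) x₀` satisfies
`H^{n-1}(E_t) ≤ n |E| / diam(E)`. -/
theorem slice_measure_le
    (m : ℕ) (hm : 1 ≤ m) (E : Set (EuclideanSpace ℝ (Fin (m + 1))))
    (hconv : Convex ℝ E) (hbd : IsBounded E) (hint : (interior E).Nonempty)
    (x₀ x₁ : EuclideanSpace ℝ (Fin (m + 1)))
    (hx₀ : x₀ ∈ frontier E) (hx₁ : x₁ ∈ frontier E)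
    (hdiam : x₁ - x₀ = Metric.diam E • EuclideanSpace.single (Fin.last m) (1 : ℝ))
    (t : ℝ) (ht : t ∈ Set.Icc (0 : ℝ) 1) :
    (volume (hslice m E (t • x₁ + (1 - t) • x₀))).toReal
      ≤ (m + 1) * (volume E).toReal / Metric.diam E :=
  slice_measure_le_general m E hconv hbd hint x₀ x₁ hx₀ hx₁ hdiam t ht
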